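/- arXiv:1610.00881 — 4 statements merged into one kernel-verified Lean document; each statement's English description precedes it below -/
import Mathlib

section
/- For α ∈ (0,1) and ν > -1, the integral ∫₀¹ ((1-u)^ν - 1) / u^{1+α} du equals (1/α)(1 - Γ(1+ν)Γ(1-α)/Γ(1-α+ν)). -/
/-!
For `μ > 0` the function `G u = (1 - (1 - u) ^ μ) * u ^ (-α) / α` has derivative
`((1 - u) ^ μ - 1) / u ^ (1 + α) + (μ / α) * u ^ (-α) * (1 - u) ^ (μ - 1)` on `(0, 1)`, tends to `0`
at `0⁺` because `|1 - (1 - u) ^ μ| ≤ max μ 1 * u`, and equals `1 / α` at `1`; hence the integral is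
`(1 - μ B(1 - α, μ)) / α`. For `ν > -1` the splitting `(1 - u) ^ ν - 1 = ((1 - u) ^ (ν + 1) - 1) + u (1 - u) ^ ν`
reduces to `μ = ν + 1` at the cost of the beta integral `B(1 - α, ν + 1)`, and
`s B(1 - α, ν + 1) = Γ(1 - α) Γ(1 + ν) / Γ(s)` for `s = 1 - α + ν` collects the two terms.
-/

open Real MeasureTheory Set

open Filter Topology

lemma Complex.ofReal_rpow_mul_one_sub_rpow {p q x : ℝ} (hx : x ∈ Icc (0 : ℝ) 1) :
    ((x ^ (p - 1) * (1 - x) ^ (q - 1) : ℝ) : ℂ) =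
      (x : ℂ) ^ ((p : ℂ) - 1) * (1 - (x : ℂ)) ^ ((q : ℂ) - 1) := by
  rw [Complex.ofReal_mul, Complex.ofReal_cpow hx.1, Complex.ofReal_cpow (sub_nonneg.2 hx.2)]
  push_cast
  rfl

lemma intervalIntegrable_rpow_mul_one_sub_rpow {p q : ℝ} (hp : 0 < p) (hq : 0 < q) :
    IntervalIntegrable (fun x : ℝ => x ^ (p - 1) * (1 - x) ^ (q - 1)) volume 0 1 := by
  have h := Complex.betaIntegral_convergent (u := p) (v := q) (by simpa) (by simpa)
  rw [intervalIntegrable_iff_integrableOn_Ioc_of_le zero_le_one] at h ⊢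
  refine IntegrableOn.congr_fun h.re (fun x hx => ?_) measurableSet_Ioc
  simp only [← Complex.ofReal_rpow_mul_one_sub_rpow (Ioc_subset_Icc_self hx), RCLike.re_to_complex,
    Complex.ofReal_re]

lemma integral_rpow_mul_one_sub_rpow {p q : ℝ} (hp : 0 < p) (hq : 0 < q) :
    ∫ x in (0 : ℝ)..1, x ^ (p - 1) * (1 - x) ^ (q - 1) = ProbabilityTheory.beta p q := by
  rw [ProbabilityTheory.beta_eq_betaIntegralReal p q hp hq, Complex.betaIntegral,
    intervalIntegral.integral_congr (g := fun x : ℝ => ((x ^ (p - 1) * (1 - x) ^ (q - 1) : ℝ) : ℂ))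
      (fun x hx => (Complex.ofReal_rpow_mul_one_sub_rpow (by rwa [uIcc_of_le zero_le_one] at hx)).symm),
    intervalIntegral.integral_ofReal, Complex.ofReal_re]

lemma abs_one_sub_rpow_sub_one_le {μ u : ℝ} (hμ : 0 ≤ μ) (hu₀ : 0 ≤ u) (hu₁ : u ≤ 1) :
    |(1 - u) ^ μ - 1| ≤ max μ 1 * u := by
  have hbase : 0 ≤ 1 - u := sub_nonneg.2 hu₁
  rw [abs_of_nonpos (sub_nonpos.2 (rpow_le_one hbase (by linarith) hμ))]
  rcases le_total μ 1 with h | h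
  · have := rpow_le_rpow_of_exponent_ge' hbase (by linarith) hμ h
    rw [rpow_one] at this
    nlinarith [le_max_right μ 1]
  · have := one_add_mul_self_le_rpow_one_add (s := -u) (by linarith) h
    rw [← sub_eq_add_neg] at this
    nlinarith [le_max_left μ 1]

lemma intervalIntegrable_one_sub_rpow_sub_one_div_rpow {α μ : ℝ} (hα : α < 1) (hμ : 0 ≤ μ) :
    IntervalIntegrable (fun u : ℝ => ((1 - u) ^ μ - 1) / u ^ (1 + α)) volume 0 1 := by
  refine ((intervalIntegral.intervalIntegrable_rpow' (r := -α) (by linarith)).const_mul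
    (max μ 1)).mono_fun' (Measurable.aestronglyMeasurable (by fun_prop)) ?_
  rw [uIoc_of_le zero_le_one]
  filter_upwards [ae_restrict_mem measurableSet_Ioc] with u hu
  rw [norm_div, Real.norm_eq_abs, Real.norm_of_nonneg (rpow_nonneg hu.1.le _),
    div_le_iff₀ (rpow_pos_of_pos hu.1 _)]
  calc |(1 - u) ^ μ - 1| ≤ max μ 1 * u := abs_one_sub_rpow_sub_one_le hμ hu.1.le hu.2
    _ = max μ 1 * u ^ (-α) * u ^ (1 + α) := by rw [mul_assoc, ← rpow_add hu.1]; norm_num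

lemma hasDerivAt_one_sub_one_sub_rpow_mul_rpow {α μ u : ℝ} (hα : α ≠ 0) (hu : u ∈ Ioo (0 : ℝ) 1) :
    HasDerivAt (fun u : ℝ => (1 - (1 - u) ^ μ) * u ^ (-α) / α)
      (((1 - u) ^ μ - 1) / u ^ (1 + α) + μ / α * (u ^ ((1 - α) - 1) * (1 - u) ^ (μ - 1))) u := by
  have h1u : 0 < 1 - u := sub_pos.2 hu.2
  refine (((((hasDerivAt_id' u).const_sub 1).rpow_const (p := μ) (Or.inl h1u.ne')).const_sub 1
    |>.mul (hasDerivAt_rpow_const (p := -α) (Or.inl hu.1.ne'))).div_const α).congr_deriv ?_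
  simp only [show (1 : ℝ) - α - 1 = -α by ring, show -α - 1 = -(1 + α) by ring, rpow_neg hu.1.le]
  field_simp
  ring

lemma integral_one_sub_rpow_sub_one_div_rpow_of_pos {α μ : ℝ} (hα₀ : 0 < α) (hα₁ : α < 1)
    (hμ : 0 < μ) :
    ∫ u in (0 : ℝ)..1, ((1 - u) ^ μ - 1) / u ^ (1 + α) =
      (1 - μ * ProbabilityTheory.beta (1 - α) μ) / α := by
  set G : ℝ → ℝ := fun u => (1 - (1 - u) ^ μ) * u ^ (-α) / α
  have hG0 : Tendsto G (𝓝[>] 0) (𝓝 0) := by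
    have hlim : Tendsto (fun u : ℝ => max μ 1 / α * u ^ (1 - α)) (𝓝[>] 0) (𝓝 0) := by
      have := ((continuousAt_rpow_const 0 (1 - α) (Or.inr (by linarith))).tendsto.const_mul
        (max μ 1 / α)).mono_left (nhdsWithin_le_nhds (s := Ioi 0))
      rwa [zero_rpow (by linarith), mul_zero] at this
    refine squeeze_zero_norm' ?_ hlim
    filter_upwards [Ioo_mem_nhdsGT zero_lt_one] with u hu
    rw [Real.norm_eq_abs, abs_div, abs_mul, abs_of_pos hα₀, abs_of_pos (rpow_pos_of_pos hu.1 _),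
      abs_sub_comm, show 1 - α = 1 + -α by ring, rpow_add hu.1, rpow_one]
    have hbound := abs_one_sub_rpow_sub_one_le hμ.le hu.1.le hu.2.le
    have hpos := rpow_pos_of_pos hu.1 (-α)
    rw [div_le_iff₀ hα₀]
    field_simp
    nlinarith
  have hG1 : Tendsto G (𝓝[<] 1) (𝓝 (1 / α)) := by
    have : ContinuousAt G 1 :=
      ((continuousAt_const.sub ((continuousAt_const.sub continuousAt_id).rpow_const
        (Or.inr hμ.le))).mul (continuousAt_rpow_const 1 (-α) (Or.inl one_ne_zero))).div_const α
    simpa [G, zero_rpow hμ.ne'] using this.tendsto.mono_left nhdsWithin_le_nhds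
  have hbeta := intervalIntegrable_rpow_mul_one_sub_rpow (sub_pos.2 hα₁) hμ
  have hmain := intervalIntegrable_one_sub_rpow_sub_one_div_rpow hα₁ hμ.le
  have hftc := intervalIntegral.integral_eq_sub_of_hasDerivAt_of_tendsto zero_lt_one
    (fun u hu => hasDerivAt_one_sub_one_sub_rpow_mul_rpow hα₀.ne' hu)
    (hmain.add (hbeta.const_mul _)) hG0 hG1
  rw [intervalIntegral.integral_add hmain (hbeta.const_mul _), intervalIntegral.integral_const_mul,
    integral_rpow_mul_one_sub_rpow (sub_pos.2 hα₁) hμ] at hftc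
  rw [sub_zero] at hftc
  rw [eq_div_iff hα₀.ne']
  field_simp at hftc
  linarith

lemma one_sub_rpow_sub_one_div_rpow_eq_add {α ν u : ℝ} (hu : u ∈ Ioo (0 : ℝ) 1) :
    ((1 - u) ^ ν - 1) / u ^ (1 + α) =
      ((1 - u) ^ (ν + 1) - 1) / u ^ (1 + α) + u ^ ((1 - α) - 1) * (1 - u) ^ ((ν + 1) - 1) := by
  have h1u : 0 < 1 - u := sub_pos.2 hu.2
  rw [rpow_add h1u, rpow_one, add_sub_cancel_right, show (1 : ℝ) - α - 1 = -α by ring,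
    rpow_neg hu.1.le, rpow_add hu.1, rpow_one]
  have hu₀ := hu.1.ne'
  have hpos := rpow_pos_of_pos hu.1 α
  field_simp
  ring

-- Also at the poles `s ∈ -ℕ`, where `Gamma s = 0`; this covers the case `1 - α + ν = 0`.
lemma Real.div_Gamma_add_one (s : ℝ) : s / Gamma (s + 1) = (Gamma s)⁻¹ := by
  rcases eq_or_ne s 0 with rfl | hs
  · simp
  · rw [Gamma_add_one hs, div_mul_cancel_left₀ hs]

theorem stmt_1 (α ν : ℝ) (hα₁ : 0 < α) (hα₂ : α < 1) (hν : -1 < ν) :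
    ∫ u in Ioo (0 : ℝ) 1, ((1 - u) ^ ν - 1) / u ^ (1 + α) =
      (1 / α) * (1 - Real.Gamma (1 + ν) * Real.Gamma (1 - α) / Real.Gamma (1 - α + ν)) := by
  have hν₁ : 0 < ν + 1 := by linarith
  have hmain := intervalIntegrable_one_sub_rpow_sub_one_div_rpow hα₂ hν₁.le
  have hbeta := intervalIntegrable_rpow_mul_one_sub_rpow (sub_pos.2 hα₂) hν₁
  have hbeta_Gamma : (1 - α + ν) * ProbabilityTheory.beta (1 - α) (ν + 1) =
      Real.Gamma (1 + ν) * Real.Gamma (1 - α) / Real.Gamma (1 - α + ν) := by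
    rw [ProbabilityTheory.beta, show 1 - α + (ν + 1) = 1 - α + ν + 1 by ring, add_comm ν 1,
      div_eq_mul_inv _ (Real.Gamma (1 - α + ν)), ← Real.div_Gamma_add_one]
    ring
  rw [setIntegral_congr_fun measurableSet_Ioo fun u hu => one_sub_rpow_sub_one_div_rpow_eq_add hu,
    integral_add (hmain.1.mono_set Ioo_subset_Ioc_self) (hbeta.1.mono_set Ioo_subset_Ioc_self),
    ← integral_Ioc_eq_integral_Ioo, ← integral_Ioc_eq_integral_Ioo,
    ← intervalIntegral.integral_of_le zero_le_one, ← intervalIntegral.integral_of_le zero_le_one,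
    integral_one_sub_rpow_sub_one_div_rpow_of_pos hα₁ hα₂ hν₁,
    integral_rpow_mul_one_sub_rpow (sub_pos.2 hα₂) hν₁, ← hbeta_Gamma]
  field_simp
  ring
end

section
/- For α > 0, the integral ∫₁^∞ log(1+u) / u^{1+α} du equals (1/α)(ψ(α) - ψ(α/2)), where ψ is the digamma function. -/
/-!
Writing `log (1 + u) = log u + log (1 + u⁻¹)` splits the integral. The first part is elementary:
`∫₁^∞ log u · u^(-1-α) du = 1/α²`. Expanding `log (1 + u⁻¹)` in powers of `u⁻¹` and integrating
termwise (the series of norms converges) turns `α` times the second part into the alternating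
series `∑ (-1)ⁿ ((n+1)⁻¹ - (n+1+α)⁻¹)`. Its even and odd halves are series
`∑ₖ ((x+k)⁻¹ - (y+k)⁻¹) = ψ y - ψ x`, obtained by telescoping `ψ (x+1) = ψ x + x⁻¹` and using
`ψ t - log t → 0`, which log-convexity of `Γ` gives through `log (t-1) ≤ ψ t ≤ log t`.
Legendre's duplication formula, differentiated logarithmically, then reduces the sum to
`ψ α - ψ (α/2) - 1/α`.
-/

open Real MeasureTheory Set

noncomputable def digamma (x : ℝ) : ℝ := deriv Real.Gamma x / Real.Gamma x

open Filter Topology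

lemma hasDerivAt_log_Gamma {x : ℝ} (hx : ∀ m : ℕ, x ≠ -m) :
    HasDerivAt (fun t => log (Gamma t)) (digamma x) x :=
  (differentiableAt_Gamma hx).hasDerivAt.log (Gamma_ne_zero hx)

lemma ne_neg_natCast_of_pos {x : ℝ} (hx : 0 < x) : ∀ m : ℕ, x ≠ -m :=
  fun m h => by linarith [Nat.cast_nonneg (α := ℝ) m]

lemma add_natCast_ne_neg_natCast {x : ℝ} (hx : ∀ m : ℕ, x ≠ -m) (k : ℕ) :
    ∀ m : ℕ, x + k ≠ -m :=
  fun m h => hx (m + k) (by push_cast; linarith)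

lemma digamma_add_one {x : ℝ} (hx : ∀ m : ℕ, x ≠ -m) :
    digamma (x + 1) = digamma x + x⁻¹ := by
  have hx0 : x ≠ 0 := by simpa using hx 0
  have hx1 : ∀ m : ℕ, x + 1 ≠ -m := by exact_mod_cast add_natCast_ne_neg_natCast hx 1
  have hshift : (fun t => Gamma (t + 1)) =ᶠ[𝓝 x] fun t => t * Gamma t := by
    filter_upwards [isOpen_ne.mem_nhds hx0] with t ht using Gamma_add_one ht
  have h := (logDeriv_congr_nhds hshift).eq_of_nhds
  rw [show (fun t => Gamma (t + 1)) = Gamma ∘ (fun t => t + 1) from rfl,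
    logDeriv_comp (x := x) (differentiableAt_Gamma hx1) (by fun_prop),
    logDeriv_mul (f := fun t => t) x hx0 (Gamma_ne_zero hx) differentiableAt_id
      (differentiableAt_Gamma hx)] at h
  simp only [deriv_add_const, deriv_id'', mul_one, logDeriv_id', one_div, add_comm] at h
  exact h

lemma log_Gamma_add_one_sub_log_Gamma {x : ℝ} (hx : 0 < x) :
    log (Gamma (x + 1)) - log (Gamma x) = log x := by
  rw [Gamma_add_one hx.ne', log_mul hx.ne' (Gamma_pos_of_pos hx).ne']
  ring

lemma digamma_le_log {x : ℝ} (hx : 0 < x) : digamma x ≤ log x := by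
  have h := convexOn_log_Gamma.le_slope_of_hasDerivAt (mem_Ioi.2 hx)
    (mem_Ioi.2 (by linarith : 0 < x + 1)) (by linarith)
    (hasDerivAt_log_Gamma (ne_neg_natCast_of_pos hx))
  rwa [slope_def_field, Function.comp_apply, Function.comp_apply,
    log_Gamma_add_one_sub_log_Gamma hx, add_sub_cancel_left, div_one] at h

lemma log_le_digamma_add_one {x : ℝ} (hx : 0 < x) : log x ≤ digamma (x + 1) := by
  have h := convexOn_log_Gamma.slope_le_of_hasDerivAt (mem_Ioi.2 hx)
    (mem_Ioi.2 (by linarith : 0 < x + 1)) (by linarith)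
    (hasDerivAt_log_Gamma (ne_neg_natCast_of_pos (by linarith)))
  rwa [slope_def_field, Function.comp_apply, Function.comp_apply,
    log_Gamma_add_one_sub_log_Gamma hx, add_sub_cancel_left, div_one] at h

lemma tendsto_digamma_sub_log : Tendsto (fun t => digamma t - log t) atTop (𝓝 0) := by
  have hlower : Tendsto (fun t => log (t - 1) - log t) atTop (𝓝 0) := by
    simpa [← sub_eq_add_neg] using ((tendsto_log_comp_add_sub_log 1).comp
      (tendsto_atTop_add_const_right _ (-1) tendsto_id)).neg
  refine tendsto_of_tendsto_of_tendsto_of_le_of_le' hlower tendsto_const_nhds ?_ ?_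
  · filter_upwards [eventually_gt_atTop 1] with t ht
    have := log_le_digamma_add_one (by linarith : 0 < t - 1)
    rw [sub_add_cancel] at this
    linarith
  · filter_upwards [eventually_gt_atTop 0] with t ht
    linarith [digamma_le_log ht]

lemma tendsto_digamma_add_sub_log (a : ℝ) :
    Tendsto (fun t => digamma (t + a) - log t) atTop (𝓝 0) := by
  have h := (tendsto_digamma_sub_log.comp (tendsto_atTop_add_const_right _ a tendsto_id)).add
    (tendsto_log_comp_add_sub_log a)
  simpa using h

lemma tendsto_digamma_add_nat_sub (x y : ℝ) :
    Tendsto (fun n : ℕ => digamma (x + n) - digamma (y + n)) atTop (𝓝 0) := by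
  have h := ((tendsto_digamma_add_sub_log x).sub (tendsto_digamma_add_sub_log y)).comp
    tendsto_natCast_atTop_atTop
  simpa [add_comm, Function.comp_def] using h

lemma sum_range_inv_add {z : ℝ} (hz : ∀ m : ℕ, z ≠ -m) (n : ℕ) :
    ∑ k ∈ Finset.range n, (z + k)⁻¹ = digamma (z + n) - digamma z := by
  induction n with
  | zero => simp
  | succ n ih =>
    rw [Finset.sum_range_succ, ih, Nat.cast_succ, ← add_assoc,
      digamma_add_one (add_natCast_ne_neg_natCast hz n)]
    ring

lemma hasSum_inv_add_sub_inv_add_of_le {x y : ℝ} (hx : 0 < x) (hxy : x ≤ y) :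
    HasSum (fun k : ℕ => (x + k)⁻¹ - (y + k)⁻¹) (digamma y - digamma x) := by
  rw [hasSum_iff_tendsto_nat_of_nonneg fun k => sub_nonneg.2 <|
    inv_anti₀ (by positivity) (by linarith)]
  simp_rw [Finset.sum_sub_distrib, sum_range_inv_add (ne_neg_natCast_of_pos hx),
    sum_range_inv_add (ne_neg_natCast_of_pos (hx.trans_le hxy))]
  have h := (tendsto_digamma_add_nat_sub x y).const_add (digamma y - digamma x)
  rw [add_zero] at h
  exact h.congr fun n => by ring

lemma hasSum_inv_add_sub_inv_add {x y : ℝ} (hx : 0 < x) (hy : 0 < y) :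
    HasSum (fun k : ℕ => (x + k)⁻¹ - (y + k)⁻¹) (digamma y - digamma x) := by
  rcases le_total x y with hxy | hyx
  · exact hasSum_inv_add_sub_inv_add_of_le hx hxy
  · simpa using (hasSum_inv_add_sub_inv_add_of_le hy hyx).neg

lemma hasSum_neg_one_pow_mul_inv_add_sub_inv_add {a b : ℝ} (ha : 0 < a) (hb : 0 < b) :
    HasSum (fun n : ℕ => (-1) ^ n * ((a + n)⁻¹ - (b + n)⁻¹))
      ((digamma (b / 2) - digamma (a / 2) -
        (digamma ((b + 1) / 2) - digamma ((a + 1) / 2))) / 2) := by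
  rw [sub_div]
  refine HasSum.even_add_odd ?_ ?_
  · refine ((hasSum_inv_add_sub_inv_add (half_pos ha) (half_pos hb)).div_const 2).congr_fun
      fun m => ?_
    simp only [pow_mul, neg_one_sq, one_pow, one_mul, Nat.cast_mul, Nat.cast_ofNat]
    field_simp
  · refine ((hasSum_inv_add_sub_inv_add (by positivity : 0 < (a + 1) / 2)
      (by positivity : 0 < (b + 1) / 2)).div_const 2).neg.congr_fun fun m => ?_
    simp only [pow_succ, pow_mul, Nat.cast_add, Nat.cast_mul, Nat.cast_ofNat, Nat.cast_one]
    field_simp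
    ring

lemma digamma_two_mul {s : ℝ} (hs : ∀ m : ℕ, 2 * s ≠ -m) :
    digamma (2 * s) = (digamma s + digamma (s + 1 / 2)) / 2 + log 2 := by
  have hs₀ : ∀ m : ℕ, s ≠ -m := fun m h => hs (2 * m) (by push_cast; linarith)
  have hs₁ : ∀ m : ℕ, s + 1 / 2 ≠ -m := fun m h => hs (2 * m + 1) (by push_cast; linarith)
  have hshift : HasDerivAt (fun t => Gamma (t + 1 / 2)) (deriv Gamma (s + 1 / 2)) s := by
    simpa using (differentiableAt_Gamma hs₁).hasDerivAt.comp_add_const s (1 / 2)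
  have hdouble : HasDerivAt (fun t => Gamma (2 * t)) (deriv Gamma (2 * s) * 2) s := by
    simpa [Function.comp_def] using (differentiableAt_Gamma hs).hasDerivAt.comp s
      ((hasDerivAt_id s).const_mul 2)
  have hpow :
      HasDerivAt (fun t : ℝ => (2 : ℝ) ^ (1 - 2 * t)) (2 ^ (1 - 2 * s) * log 2 * -2) s :=
    (hasStrictDerivAt_const_rpow two_pos _).hasDerivAt.comp s
      (by simpa using ((hasDerivAt_id s).const_mul 2).const_sub 1)
  have h := congrArg (logDeriv · s) (funext Gamma_mul_Gamma_add_half)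
  rw [logDeriv_mul (g := fun t => Gamma (t + 1 / 2)) s (Gamma_ne_zero hs₀) (Gamma_ne_zero hs₁)
      (differentiableAt_Gamma hs₀) hshift.differentiableAt,
    logDeriv_mul_const s _ (sqrt_pos.2 pi_pos).ne',
    logDeriv_mul (f := fun t => Gamma (2 * t)) s (Gamma_ne_zero hs) (by positivity)
      hdouble.differentiableAt hpow.differentiableAt,
    logDeriv_apply, logDeriv_apply, logDeriv_apply, logDeriv_apply,
    hshift.deriv,
    hdouble.deriv, hpow.deriv] at h
  have hlog : (2 : ℝ) ^ (1 - 2 * s) * log 2 * -2 / 2 ^ (1 - 2 * s) = -2 * log 2 := by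
    field_simp
  rw [hlog] at h
  unfold digamma
  linear_combination (-1 / 2) * h

section LogRpow

variable {α : ℝ}

lemma hasDerivAt_log_mul_rpow_primitive (hα : α ≠ 0) {u : ℝ} (hu : 0 < u) :
    HasDerivAt (fun v => -v ^ (-α) * (log v / α + 1 / α ^ 2)) (log u * u ^ (-(1 + α))) u := by
  refine (((hasDerivAt_rpow_const (p := -α) (Or.inl hu.ne')).neg).mul
    (((hasDerivAt_log hu.ne').div_const α).add_const (1 / α ^ 2))).congr_deriv ?_
  simp only [Pi.neg_apply]
  rw [show -α - 1 = -(1 + α) by ring, rpow_neg hu.le, rpow_neg hu.le, rpow_add hu, rpow_one]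
  field_simp
  ring

lemma tendsto_log_mul_rpow_primitive (hα : 0 < α) :
    Tendsto (fun v => -v ^ (-α) * (log v / α + 1 / α ^ 2)) atTop (𝓝 0) := by
  have hlog : Tendsto (fun v => log v / v ^ α) atTop (𝓝 0) :=
    (isLittleO_log_rpow_atTop hα).tendsto_div_nhds_zero
  have h := ((hlog.div_const α).add ((tendsto_rpow_neg_atTop hα).div_const (α ^ 2))).neg
  rw [zero_div, zero_div, add_zero, neg_zero] at h
  refine h.congr' ?_
  filter_upwards [eventually_gt_atTop 0] with v hv
  rw [rpow_neg hv.le]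
  field_simp

lemma integrableOn_log_mul_rpow_Ioi_one (hα : 0 < α) :
    IntegrableOn (fun u => log u * u ^ (-(1 + α))) (Ioi 1) :=
  integrableOn_Ioi_deriv_of_nonneg'
    (fun u hu => hasDerivAt_log_mul_rpow_primitive hα.ne' (by linarith [mem_Ici.1 hu]))
    (fun u hu => mul_nonneg (log_nonneg (le_of_lt hu)) (rpow_pos_of_pos (one_pos.trans hu) _).le)
    (tendsto_log_mul_rpow_primitive hα)

lemma integral_log_mul_rpow_Ioi_one (hα : 0 < α) :
    ∫ u in Ioi 1, log u * u ^ (-(1 + α)) = 1 / α ^ 2 := by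
  rw [integral_Ioi_of_hasDerivAt_of_nonneg'
    (fun u hu => hasDerivAt_log_mul_rpow_primitive hα.ne' (by linarith [mem_Ici.1 hu]))
    (fun u hu => mul_nonneg (log_nonneg (le_of_lt hu)) (rpow_pos_of_pos (one_pos.trans hu) _).le)
    (tendsto_log_mul_rpow_primitive hα)]
  simp

end LogRpow

lemma hasSum_neg_one_pow_mul_pow_div_log_one_add {x : ℝ} (hx : |x| < 1) :
    HasSum (fun n : ℕ => (-1) ^ n * x ^ (n + 1) / (n + 1)) (log (1 + x)) := by
  have h := (hasSum_pow_div_log_of_abs_lt_one (x := -x) (by rwa [abs_neg])).neg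
  rw [sub_neg_eq_add, neg_neg] at h
  refine h.congr_fun fun n => ?_
  rw [neg_pow, pow_succ]
  ring

section LogOneAddInv

variable {α : ℝ}

lemma hasSum_log_one_add_inv_mul_rpow {u : ℝ} (hu : 1 < u) :
    HasSum (fun n : ℕ => (-1) ^ n / (n + 1) * u ^ (-(α + n + 2)))
      (log (1 + u⁻¹) * u ^ (-(1 + α))) := by
  have hu₀ : 0 < u := one_pos.trans hu
  have hx : |u⁻¹| < 1 := by
    rw [abs_inv, abs_of_pos hu₀]
    exact inv_lt_one_of_one_lt₀ hu
  refine ((hasSum_neg_one_pow_mul_pow_div_log_one_add hx).mul_right _).congr_fun fun n => ?_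
  rw [show -(α + n + 2) = -((n + 1 : ℕ) : ℝ) + -(1 + α) by push_cast; ring, rpow_add hu₀,
    rpow_neg hu₀.le, rpow_natCast, inv_pow]
  ring

lemma integrableOn_log_one_add_inv_mul_rpow (hα : 0 < α) :
    IntegrableOn (fun u => log (1 + u⁻¹) * u ^ (-(1 + α))) (Ioi 1) := by
  refine (integrableOn_Ioi_rpow_of_lt (by linarith : -(1 + α) < -1) one_pos).mono'
    (Measurable.aestronglyMeasurable (by fun_prop)) ?_
  filter_upwards [ae_restrict_mem measurableSet_Ioi] with u hu
  have hu₀ : 0 < u := one_pos.trans hu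
  have hlog₀ : 0 ≤ log (1 + u⁻¹) := log_nonneg (by linarith [inv_pos.2 hu₀])
  have hlog₁ : log (1 + u⁻¹) ≤ 1 := by
    linarith [log_le_sub_one_of_pos (by positivity : 0 < 1 + u⁻¹),
      inv_lt_one_of_one_lt₀ (mem_Ioi.1 hu)]
  rw [norm_of_nonneg (by positivity)]
  exact mul_le_of_le_one_left (by positivity) hlog₁

lemma hasSum_integral_log_one_add_inv_mul_rpow (hα : 0 < α) :
    HasSum (fun n : ℕ => (-1) ^ n / ((n + 1) * (α + n + 1)))
      (∫ u in Ioi 1, log (1 + u⁻¹) * u ^ (-(1 + α))) := by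
  have hexp (n : ℕ) : -(α + n + 2) < -1 := by linarith [Nat.cast_nonneg (α := ℝ) n]
  have hpow (n : ℕ) : ∫ u in Ioi (1 : ℝ), u ^ (-(α + n + 2)) = (α + n + 1)⁻¹ := by
    rw [integral_Ioi_rpow_of_lt (hexp n) one_pos, one_rpow,
      show -(α + n + 2) + 1 = -(α + n + 1) by ring, neg_div_neg_eq, one_div]
  have hnorm (n : ℕ) :
      ∫ u in Ioi (1 : ℝ), ‖(-1) ^ n / (n + 1) * u ^ (-(α + n + 2))‖ =
        1 / ((n + 1) * (α + n + 1)) := by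
    rw [setIntegral_congr_fun measurableSet_Ioi
      (g := fun u => 1 / ((n : ℝ) + 1) * u ^ (-(α + n + 2))) fun u hu => ?_,
      integral_const_mul, hpow]
    · rw [one_div, one_div, mul_inv]
    rw [norm_mul, norm_div, norm_pow, norm_neg, norm_one, one_pow,
      norm_of_nonneg (rpow_pos_of_pos (one_pos.trans hu) _).le,
      norm_of_nonneg (by positivity : (0 : ℝ) ≤ n + 1)]
  have hsummable : Summable fun n : ℕ => 1 / (((n : ℝ) + 1) * (α + n + 1)) := by
    refine ((summable_nat_add_iff 1).2 (summable_one_div_nat_pow.2 one_lt_two)).of_nonneg_of_le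
      (fun n => by positivity) fun n => ?_
    rw [Nat.cast_add_one, sq]
    gcongr
    linarith
  have h := hasSum_integral_of_summable_integral_norm (μ := volume.restrict (Ioi 1))
    (fun n => (integrableOn_Ioi_rpow_of_lt (hexp n) one_pos).const_mul ((-1) ^ n / (n + 1)))
    (by simpa only [hnorm] using hsummable)
  rw [setIntegral_congr_fun measurableSet_Ioi
    fun u hu => (hasSum_log_one_add_inv_mul_rpow (α := α) (mem_Ioi.1 hu)).tsum_eq] at h
  refine h.congr_fun fun n => ?_
  rw [integral_const_mul, hpow, ← div_eq_mul_inv, div_div]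

end LogOneAddInv

lemma integral_log_one_add_inv_mul_rpow {α : ℝ} (hα : 0 < α) :
    ∫ u in Ioi 1, log (1 + u⁻¹) * u ^ (-(1 + α)) =
      (digamma α - digamma (α / 2) - α⁻¹) / α := by
  have hseries := (hasSum_integral_log_one_add_inv_mul_rpow hα).mul_left α
  have hdigamma := hasSum_neg_one_pow_mul_inv_add_sub_inv_add one_pos (by linarith : 0 < 1 + α)
  have hJ := hseries.unique <| hdigamma.congr_fun fun n => by
    field_simp
    ring
  have hhalf := digamma_two_mul (s := α / 2) (ne_neg_natCast_of_pos (by linarith))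
  have hone := digamma_two_mul (s := 1 / 2) (ne_neg_natCast_of_pos (by norm_num))
  have hshift := digamma_add_one (x := α / 2) (ne_neg_natCast_of_pos (by linarith))
  rw [show 2 * (α / 2) = α by ring] at hhalf
  rw [show (2 : ℝ) * (1 / 2) = 1 by norm_num, show (1 : ℝ) / 2 + 1 / 2 = 1 by norm_num] at hone
  rw [show (1 + α) / 2 = α / 2 + 1 / 2 by ring, show (1 + α + 1) / 2 = α / 2 + 1 by ring,
    show ((1 : ℝ) + 1) / 2 = 1 by norm_num, hshift] at hJ
  rw [eq_div_iff hα.ne', mul_comm]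
  linear_combination hJ - hhalf + hone

theorem stmt_2 (α : ℝ) (hα : 0 < α) :
    ∫ u in Ioi (1 : ℝ), Real.log (1 + u) / u ^ (1 + α) =
      (1 / α) * (digamma α - digamma (α / 2)) := by
  have hsplit : ∫ u in Ioi (1 : ℝ), log (1 + u) / u ^ (1 + α) =
      ∫ u in Ioi (1 : ℝ), (log u * u ^ (-(1 + α)) + log (1 + u⁻¹) * u ^ (-(1 + α))) := by
    refine setIntegral_congr_fun measurableSet_Ioi fun u hu => ?_
    have hu₀ : 0 < u := one_pos.trans hu
    rw [← add_mul, ← log_mul hu₀.ne' (by positivity), mul_add, mul_inv_cancel₀ hu₀.ne',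
      mul_one, add_comm u, rpow_neg hu₀.le, div_eq_mul_inv]
  rw [hsplit, integral_add (integrableOn_log_mul_rpow_Ioi_one hα)
    (integrableOn_log_one_add_inv_mul_rpow hα), integral_log_mul_rpow_Ioi_one hα,
    integral_log_one_add_inv_mul_rpow hα]
  field_simp
  ring
end

section
/- For α > 0, the integral ∫₁^∞ log(u-1) / u^{1+α} du equals -(1/α)(γ + ψ(α)), where γ is Euler's constant and ψ is the digamma function. -/
/-!
After the shift `u = 1 + x`, the integral is the derivative at `s = 1` of the Mellin transform
`M(s) = ∫₀^∞ x^(s-1) (1 + x)^(-a) dx` with `a = 1 + α`. The substitution `x = 1/t - 1` turns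
`M(s)` into the Beta integral `B(s, a - s) = Γ(s) Γ(a - s) / Γ(a)`, whose logarithmic derivative
is `ψ(s) - ψ(a - s)`; at `s = 1` this is `Γ(α) / Γ(1 + α) · (ψ(1) - ψ(α))` with `ψ(1) = -γ`.
-/

open Real MeasureTheory Set

open Filter Asymptotics Topology

lemma setIntegral_Ioi_comp_add_right {E : Type*} [NormedAddCommGroup E] [NormedSpace ℝ E]
    (g : ℝ → E) (c : ℝ) : ∫ x in Ioi 0, g (x + c) = ∫ u in Ioi c, g u := by
  simpa using (measurePreserving_add_right volume c).setIntegral_preimage_emb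
    (measurableEmbedding_addRight c) g (Ioi c)

lemma image_inv_sub_one_Ioo : (fun t : ℝ => t⁻¹ - 1) '' Ioo 0 1 = Ioi 0 := by
  ext x
  simp only [mem_image, mem_Ioo, mem_Ioi]
  constructor
  · rintro ⟨t, ⟨ht0, ht1⟩, rfl⟩
    linarith [one_lt_inv_iff₀.mpr ⟨ht0, ht1⟩]
  · intro hx
    exact ⟨(1 + x)⁻¹, ⟨by positivity, inv_lt_one_of_one_lt₀ (by linarith)⟩, by simp⟩

namespace Complex

lemma ne_neg_natCast_of_re_pos {s : ℂ} (hs : 0 < s.re) (m : ℕ) : s ≠ -m := by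
  rintro rfl
  simp only [neg_re, natCast_re, Left.neg_pos_iff] at hs
  linarith [m.cast_nonneg (α := ℝ)]

lemma deriv_Gamma_eq_digamma_mul {s : ℂ} (hs : ∀ m : ℕ, s ≠ -m) :
    deriv Gamma s = digamma s * Gamma s := by
  rw [digamma_def, logDeriv_apply, div_mul_cancel₀ _ (Gamma_ne_zero hs)]

lemma digamma_ofReal {x : ℝ} (hx : 0 < x) : digamma x = _root_.digamma x := by
  have hx' : ∀ m : ℕ, x ≠ -m := by
    exact_mod_cast ne_neg_natCast_of_re_pos (s := x) (by simpa using hx)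
  have hderiv : deriv Gamma x = deriv Real.Gamma x := by
    rw [← (funext Gamma_ofReal ▸
      ((differentiableAt_Gamma x (by exact_mod_cast hx')).hasDerivAt.comp_ofReal).deriv :)]
    exact (Real.differentiableAt_Gamma hx').hasDerivAt.ofReal_comp.deriv
  rw [digamma_def, logDeriv_apply, hderiv, Gamma_ofReal, _root_.digamma, ofReal_div]

lemma hasDerivAt_Gamma_mul_Gamma_sub (a : ℂ) {s : ℂ} (hs : ∀ m : ℕ, s ≠ -m)
    (has : ∀ m : ℕ, a - s ≠ -m) :
    HasDerivAt (fun z => Gamma z * Gamma (a - z))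
      (Gamma s * Gamma (a - s) * (digamma s - digamma (a - s))) s := by
  have hΓs := (differentiableAt_Gamma s hs).hasDerivAt
  have hΓas := (differentiableAt_Gamma (a - s) has).hasDerivAt.comp s
    ((hasDerivAt_id s).const_sub a)
  refine (hΓs.mul hΓas).congr_deriv ?_
  rw [deriv_Gamma_eq_digamma_mul hs, deriv_Gamma_eq_digamma_mul has, Function.comp_apply]
  ring

lemma mellin_one_add_rpow_neg_eq_betaIntegral (a : ℝ) (s : ℂ) :
    mellin (fun x : ℝ => (((1 + x) ^ (-a) : ℝ) : ℂ)) s = betaIntegral s (a - s) := by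
  have hderiv : ∀ t ∈ Ioo (0 : ℝ) 1,
      HasDerivWithinAt (fun t : ℝ => t⁻¹ - 1) (-(t ^ 2)⁻¹) (Ioo 0 1) t := fun t ht =>
    ((hasDerivAt_inv ht.1.ne').sub_const 1).hasDerivWithinAt
  have hinj : InjOn (fun t : ℝ => t⁻¹ - 1) (Ioo 0 1) := fun t _ t' _ h =>
    inv_injective (sub_left_injective h)
  rw [mellin, ← image_inv_sub_one_Ioo,
    integral_image_eq_integral_abs_deriv_smul measurableSet_Ioo hderiv hinj, ← betaIntegral_symm,
    betaIntegral, intervalIntegral.integral_of_le zero_le_one, integral_Ioc_eq_integral_Ioo]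
  refine setIntegral_congr_fun measurableSet_Ioo fun t ⟨ht0, ht1⟩ => ?_
  have h1t : 0 < 1 - t := by linarith
  have ht : (t : ℂ) ≠ 0 := ofReal_ne_zero.mpr ht0.ne'
  have hpow : |-(t ^ 2)⁻¹| * (1 + (t⁻¹ - 1)) ^ (-a) = t ^ (a - 2) := by
    rw [abs_neg, abs_inv, abs_sq, add_sub_cancel, Real.inv_rpow ht0.le, Real.rpow_neg ht0.le,
      inv_inv, Real.rpow_sub ht0, Real.rpow_two, div_eq_mul_inv, mul_comm]
  calc |-(t ^ 2)⁻¹| • (((t⁻¹ - 1 : ℝ) : ℂ) ^ (s - 1) • (((1 + (t⁻¹ - 1)) ^ (-a) : ℝ) : ℂ))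
      = ((|-(t ^ 2)⁻¹| * (1 + (t⁻¹ - 1)) ^ (-a) : ℝ) : ℂ) * ((t⁻¹ - 1 : ℝ) : ℂ) ^ (s - 1) := by
        rw [real_smul, smul_eq_mul, ofReal_mul]
        ring
    _ = (t : ℂ) ^ ((a - 2 : ℝ) : ℂ) * ((1 - t : ℝ) : ℂ) ^ (s - 1) / (t : ℂ) ^ (s - 1) := by
        rw [hpow, ofReal_cpow ht0.le, show t⁻¹ - 1 = (1 - t) / t by field_simp, ofReal_div,
          div_cpow_ofReal_nonneg h1t.le ht0.le, mul_div_assoc]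
    _ = (t : ℂ) ^ (a - s - 1) * (1 - t) ^ (s - 1) := by
        rw [mul_div_right_comm, ← cpow_sub _ _ ht]
        push_cast
        ring_nf

lemma mellin_one_add_rpow_neg {a : ℝ} {s : ℂ} (hs : 0 < s.re) (hsa : s.re < a) :
    mellin (fun x : ℝ => (((1 + x) ^ (-a) : ℝ) : ℂ)) s = Gamma s * Gamma (a - s) / Gamma a := by
  rw [mellin_one_add_rpow_neg_eq_betaIntegral,
    betaIntegral_eq_Gamma_mul_div _ _ hs (by simpa using hsa), add_sub_cancel]

lemma hasDerivAt_mellin_one_add_rpow_neg {a : ℝ} {s : ℂ} (hs : 0 < s.re) (hsa : s.re < a) :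
    HasDerivAt (mellin fun x : ℝ => (((1 + x) ^ (-a) : ℝ) : ℂ))
      (mellin (fun x : ℝ => Real.log x • (((1 + x) ^ (-a) : ℝ) : ℂ)) s) s := by
  set f : ℝ → ℂ := fun x => (((1 + x) ^ (-a) : ℝ) : ℂ)
  have ha : 0 < a := hs.trans hsa
  have hbound : ∀ x : ℝ, 0 < x → ‖f x‖ ≤ min 1 (x ^ (-a)) := fun x hx => by
    rw [norm_real, Real.norm_of_nonneg (by positivity)]
    exact le_min (Real.rpow_le_one_of_one_le_of_nonpos (by linarith) (by linarith))
      (Real.rpow_le_rpow_of_nonpos hx (by linarith) (by linarith))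
  have hfc : LocallyIntegrableOn f (Ioi 0) := by
    refine ContinuousOn.locallyIntegrableOn (fun x (hx : 0 < x) => ?_) measurableSet_Ioi
    have h1x : ContinuousAt (fun x : ℝ => 1 + x) x := continuousAt_const.add continuousAt_id
    exact (continuous_ofReal.continuousAt.comp
      (h1x.rpow_const (Or.inl (by positivity)))).continuousWithinAt
  have hf_top : f =O[atTop] (· ^ (-a)) := by
    refine IsBigO.of_bound 1 ?_
    filter_upwards [eventually_gt_atTop 0] with x hx
    rw [one_mul, Real.norm_of_nonneg (by positivity)]
    exact (hbound x hx).trans (min_le_right _ _)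
  have hf_bot : f =O[𝓝[>] 0] (· ^ (-(0 : ℝ))) := by
    refine IsBigO.of_bound 1 ?_
    filter_upwards [self_mem_nhdsWithin] with x (hx : 0 < x)
    rw [neg_zero, Real.rpow_zero, norm_one, one_mul]
    exact (hbound x hx).trans (min_le_left _ _)
  exact (mellin_hasDerivAt_of_isBigO_rpow hfc hf_top hsa hf_bot hs).2

lemma mellin_log_smul_one_add_rpow_neg {a : ℝ} {s : ℂ} (hs : 0 < s.re) (hsa : s.re < a) :
    mellin (fun x : ℝ => Real.log x • (((1 + x) ^ (-a) : ℝ) : ℂ)) s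
      = Gamma s * Gamma (a - s) / Gamma a * (digamma s - digamma (a - s)) := by
  have hstrip : IsOpen {z : ℂ | 0 < z.re ∧ z.re < a} :=
    (isOpen_lt continuous_const continuous_re).inter (isOpen_lt continuous_re continuous_const)
  have hclosed : (mellin fun x : ℝ => (((1 + x) ^ (-a) : ℝ) : ℂ))
      =ᶠ[𝓝 s] fun z => Gamma z * Gamma (a - z) / Gamma a := by
    filter_upwards [hstrip.mem_nhds ⟨hs, hsa⟩] with z ⟨hz, hza⟩
    exact mellin_one_add_rpow_neg hz hza
  have has : 0 < ((a : ℂ) - s).re := by simpa using hsa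
  exact (hclosed.hasDerivAt_iff.mp (hasDerivAt_mellin_one_add_rpow_neg hs hsa)).unique
    (((hasDerivAt_Gamma_mul_Gamma_sub a (ne_neg_natCast_of_re_pos hs)
      (ne_neg_natCast_of_re_pos has)).div_const _).congr_deriv (by ring))

end Complex

theorem stmt_3 (α : ℝ) (hα : 0 < α) :
    ∫ u in Ioi (1 : ℝ), Real.log (u - 1) / u ^ (1 + α) =
      -(1 / α) * (Real.eulerMascheroniConstant + digamma α) := by
  have hshift : ∫ u in Ioi (1 : ℝ), Real.log (u - 1) / u ^ (1 + α)
      = ∫ x in Ioi (0 : ℝ), Real.log x * (1 + x) ^ (-(1 + α)) := by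
    rw [← setIntegral_Ioi_comp_add_right]
    refine setIntegral_congr_fun measurableSet_Ioi fun x (hx : 0 < x) => ?_
    rw [add_sub_cancel_right, add_comm x, Real.rpow_neg (by linarith), div_eq_mul_inv]
  have hmellin := Complex.mellin_log_smul_one_add_rpow_neg (a := 1 + α) (s := 1)
    (by norm_num) (by simpa using hα)
  have hαC : (α : ℂ) ≠ 0 := Complex.ofReal_ne_zero.mpr hα.ne'
  have hΓ : Complex.Gamma α ≠ 0 := Complex.Gamma_ne_zero_of_re_pos (by simpa using hα)
  simp only [mellin, sub_self, Complex.cpow_zero, one_smul, Complex.real_smul,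
    ← Complex.ofReal_mul, integral_complex_ofReal, Complex.ofReal_add, Complex.ofReal_one,
    add_comm (1 : ℂ), add_sub_cancel_right, Complex.Gamma_one, Complex.digamma_one,
    Complex.Gamma_add_one _ hαC, one_mul, div_mul_cancel_right₀ hΓ,
    Complex.digamma_ofReal hα] at hmellin
  apply Complex.ofReal_injective
  rw [hshift, hmellin]
  push_cast
  ring
end

section
/- Let U be an (M+1)×(M+1) real matrix with U_{k,ℓ} ≥ 0 for 0 ≤ k < ℓ ≤ M and all other entries zero, and let A₁,...,A_M > 0. Then there exists a unique strictly lower triangular matrix L (L_{k,ℓ} = 0 for ℓ ≥ k) satisfying: (i) L_{m,m-1} = (UL)_{m,m} + A_m for m = 1,...,M; and (ii) L_{k,ℓ} = L_{ℓ+1,ℓ} + L_{ℓ+2,ℓ+1} + ... + L_{k,k-1} for 0 ≤ ℓ < k ≤ M. Moreover all strictly lower triangular entries of L are positive: L_{k,ℓ} > 0 for 0 ≤ ℓ < k ≤ M. -/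
open Finset
open Fin.NatCast

/-!
Condition (ii) says that `L` is determined by its subdiagonal `d m = L m (m-1)`, through
`L k ℓ = ∑_{ℓ < j ≤ k} d j`. As `L` is strictly lower triangular, `(U L) m m` only involves the
entries `L ℓ m` with `ℓ > m`, hence only `d j` with `j > m`, so condition (i) becomes the backward
recursion `d m = A m + ∑_{m < ℓ ≤ M} U m ℓ ∑_{m < j ≤ ℓ} d j`. It has exactly one solution, and
downward induction shows that it is positive when `A > 0` and `U ≥ 0`.
-/

noncomputable def backwardSolve (M : ℕ) (U : ℕ → ℕ → ℝ) (A : ℕ → ℝ) (m : ℕ) : ℝ :=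
  A m + ∑ ℓ ∈ (Ioc m M).attach, U m ℓ * ∑ j ∈ (Ioc m ℓ).attach, backwardSolve M U A j
termination_by M - m
decreasing_by
  have := mem_Ioc.mp ℓ.2
  have := mem_Ioc.mp j.2
  omega

section backwardSolve

variable {M : ℕ} {U : ℕ → ℕ → ℝ} {A : ℕ → ℝ}

theorem backwardSolve_eq (m : ℕ) :
    backwardSolve M U A m =
      A m + ∑ ℓ ∈ Ioc m M, U m ℓ * ∑ j ∈ Ioc m ℓ, backwardSolve M U A j := by
  rw [backwardSolve, ← sum_attach (Ioc m M)]
  simp only [sum_attach (Ioc m _)]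

theorem eq_backwardSolve {n : ℕ} {d : ℕ → ℝ}
    (hd : ∀ m, n ≤ m → m ≤ M → d m = A m + ∑ ℓ ∈ Ioc m M, U m ℓ * ∑ j ∈ Ioc m ℓ, d j)
    (m : ℕ) (hnm : n ≤ m) (hmM : m ≤ M) : d m = backwardSolve M U A m := by
  rw [hd m hnm hmM, backwardSolve_eq]
  refine congrArg _ (sum_congr rfl fun ℓ hℓ => congrArg _ (sum_congr rfl fun j hj => ?_))
  have := mem_Ioc.mp hℓ
  have := mem_Ioc.mp hj
  exact eq_backwardSolve hd j (by omega) (by omega)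
termination_by M - m
decreasing_by omega

theorem backwardSolve_pos {n : ℕ} (hU : ∀ m ℓ, m < ℓ → ℓ ≤ M → 0 ≤ U m ℓ)
    (hA : ∀ m, n ≤ m → m ≤ M → 0 < A m) (m : ℕ) (hnm : n ≤ m) (hmM : m ≤ M) :
    0 < backwardSolve M U A m := by
  rw [backwardSolve_eq]
  refine add_pos_of_pos_of_nonneg (hA m hnm hmM) (sum_nonneg fun ℓ hℓ => ?_)
  have := mem_Ioc.mp hℓ
  refine mul_nonneg (hU m ℓ (by omega) (by omega)) (sum_nonneg fun j hj => ?_)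
  have := mem_Ioc.mp hj
  exact (backwardSolve_pos hU hA j (by omega) (by omega)).le
termination_by M - m
decreasing_by omega

end backwardSolve

theorem sum_Ioc_eq_sum_range {β : Type*} [AddCommMonoid β] (f : ℕ → β) (ℓ k : ℕ) :
    ∑ j ∈ Ioc ℓ k, f j = ∑ r ∈ range (k - ℓ), f (ℓ + r + 1) := by
  rw [← Ico_add_one_add_one_eq_Ioc, sum_Ico_eq_sum_range, Nat.add_sub_add_right]
  exact sum_congr rfl fun r _ => by rw [add_right_comm]

noncomputable def lowerOfSubdiag (M : ℕ) (d : ℕ → ℝ) : Matrix (Fin (M + 1)) (Fin (M + 1)) ℝ :=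
  fun k ℓ => if ℓ < k then ∑ j ∈ Ioc (ℓ : ℕ) k, d j else 0

section lowerOfSubdiag

variable {M : ℕ}

theorem lowerOfSubdiag_of_le (d : ℕ → ℝ) {k ℓ : Fin (M + 1)} (h : k ≤ ℓ) :
    lowerOfSubdiag M d k ℓ = 0 :=
  if_neg h.not_gt

theorem lowerOfSubdiag_natCast (d : ℕ → ℝ) {k ℓ : ℕ} (h : ℓ < k) (hk : k ≤ M) :
    lowerOfSubdiag M d k ℓ = ∑ j ∈ Ioc ℓ k, d j := by
  rw [lowerOfSubdiag, if_pos ((Fin.natCast_lt_natCast (by omega) hk).2 h),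
    Fin.val_cast_of_lt (by omega), Fin.val_cast_of_lt (by omega)]

theorem lowerOfSubdiag_natCast_sub_one (d : ℕ → ℝ) {m : ℕ} (h : 1 ≤ m) (hm : m ≤ M) :
    lowerOfSubdiag M d m (m - 1 : ℕ) = d m := by
  obtain ⟨n, rfl⟩ := Nat.exists_eq_add_of_le' h
  rw [lowerOfSubdiag_natCast d (by omega) hm, Nat.add_sub_cancel, Nat.Ioc_succ_singleton,
    sum_singleton]

theorem lowerOfSubdiag_eq_sum_range (d : ℕ → ℝ) {k ℓ : ℕ} (h : ℓ < k) (hk : k ≤ M) :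
    lowerOfSubdiag M d k ℓ =
      ∑ r ∈ range (k - ℓ), lowerOfSubdiag M d (ℓ + r + 1 : ℕ) (ℓ + r : ℕ) := by
  rw [lowerOfSubdiag_natCast d h hk, sum_Ioc_eq_sum_range]
  refine sum_congr rfl fun r hr => ?_
  have := mem_range.mp hr
  rw [← lowerOfSubdiag_natCast_sub_one (M := M) d (by omega) (by omega), Nat.add_sub_cancel]

theorem lowerOfSubdiag_congr {d d' : ℕ → ℝ} (h : ∀ j, 1 ≤ j → j ≤ M → d j = d' j) :
    lowerOfSubdiag M d = lowerOfSubdiag M d' := by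
  ext k ℓ
  refine if_congr Iff.rfl (sum_congr rfl fun j hj => ?_) rfl
  have := mem_Ioc.mp hj
  exact h j (by omega) (by omega)

theorem lowerOfSubdiag_pos {d : ℕ → ℝ} (hd : ∀ j, 1 ≤ j → j ≤ M → 0 < d j)
    {k ℓ : Fin (M + 1)} (h : ℓ < k) : 0 < lowerOfSubdiag M d k ℓ := by
  refine (if_pos h).trans_gt (sum_pos (fun j hj => ?_) (nonempty_Ioc.2 h))
  have := mem_Ioc.mp hj
  exact hd j (by omega) (by omega)

theorem eq_lowerOfSubdiag {L : Matrix (Fin (M + 1)) (Fin (M + 1)) ℝ}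
    (hupper : ∀ k ℓ : Fin (M + 1), ℓ ≥ k → L k ℓ = 0)
    (hsum : ∀ k ℓ : ℕ, ℓ < k → k ≤ M →
      L (k : Fin (M + 1)) (ℓ : Fin (M + 1)) =
        ∑ r ∈ range (k - ℓ), L ((ℓ + r + 1 : ℕ) : Fin (M + 1)) ((ℓ + r : ℕ) : Fin (M + 1))) :
    L = lowerOfSubdiag M (fun j => L j (j - 1 : ℕ)) := by
  ext k ℓ
  rcases lt_or_ge ℓ k with h | h
  · have hk : (k : ℕ) ≤ M := Nat.lt_succ_iff.mp k.isLt
    rw [← Fin.cast_val_eq_self k, ← Fin.cast_val_eq_self ℓ, hsum _ _ h hk,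
      lowerOfSubdiag_natCast _ h hk, sum_Ioc_eq_sum_range]
    simp only [Nat.add_sub_cancel]
  · rw [hupper k ℓ h, lowerOfSubdiag_of_le _ h]

theorem mul_apply_natCast_diag_of_lower {α : Type*} [NonUnitalNonAssocSemiring α]
    (U L : Matrix (Fin (M + 1)) (Fin (M + 1)) α)
    (hL : ∀ k ℓ : Fin (M + 1), ℓ ≥ k → L k ℓ = 0) {m : ℕ} (hm : m ≤ M) :
    (U * L) (m : Fin (M + 1)) (m : Fin (M + 1)) =
      ∑ ℓ ∈ Ioc m M, U (m : Fin (M + 1)) (ℓ : Fin (M + 1)) * L ℓ m := by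
  have hvanish : ∀ ℓ ∈ range (M + 1), ℓ ∉ Ioc m M →
      U (m : Fin (M + 1)) (ℓ : Fin (M + 1)) * L ℓ m = 0 := fun ℓ hℓ hℓm => by
    simp only [mem_range, mem_Ioc, not_and_or, not_lt, not_le] at hℓ hℓm
    rw [hL _ _ ((Fin.natCast_le_natCast (by omega) hm).2 (by omega)), mul_zero]
  rw [sum_subset (fun ℓ hℓ => by simp only [mem_range, mem_Ioc] at hℓ ⊢; omega) hvanish,
    ← Fin.sum_univ_eq_sum_range (fun ℓ => U (m : Fin (M + 1)) (ℓ : Fin (M + 1)) * L ℓ m),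
    Matrix.mul_apply]
  simp only [Fin.cast_val_eq_self]

theorem mul_lowerOfSubdiag_apply_natCast_diag (U : Matrix (Fin (M + 1)) (Fin (M + 1)) ℝ)
    (d : ℕ → ℝ) {m : ℕ} (hm : m ≤ M) :
    (U * lowerOfSubdiag M d) (m : Fin (M + 1)) (m : Fin (M + 1)) =
      ∑ ℓ ∈ Ioc m M, U (m : Fin (M + 1)) (ℓ : Fin (M + 1)) * ∑ j ∈ Ioc m ℓ, d j := by
  rw [mul_apply_natCast_diag_of_lower U _ (fun k ℓ => lowerOfSubdiag_of_le d) hm]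
  refine sum_congr rfl fun ℓ hℓ => ?_
  have := mem_Ioc.mp hℓ
  rw [lowerOfSubdiag_natCast d this.1 this.2]

end lowerOfSubdiag

section solution

variable {M : ℕ} {U : Matrix (Fin (M + 1)) (Fin (M + 1)) ℝ} {A : Fin (M + 1) → ℝ}

theorem lowerOfSubdiag_backwardSolve_natCast_sub_one {m : ℕ} (h : 1 ≤ m) (hm : m ≤ M) :
    lowerOfSubdiag M (backwardSolve M (fun i j : ℕ => U i j) (fun i : ℕ => A i))
        (m : Fin (M + 1)) ((m - 1 : ℕ) : Fin (M + 1)) =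
      (U * lowerOfSubdiag M (backwardSolve M (fun i j : ℕ => U i j) (fun i : ℕ => A i)))
        (m : Fin (M + 1)) (m : Fin (M + 1)) + A (m : Fin (M + 1)) := by
  rw [lowerOfSubdiag_natCast_sub_one _ h hm, mul_lowerOfSubdiag_apply_natCast_diag U _ hm,
    backwardSolve_eq, add_comm (A _)]

theorem eq_lowerOfSubdiag_backwardSolve {L : Matrix (Fin (M + 1)) (Fin (M + 1)) ℝ}
    (hupper : ∀ k ℓ : Fin (M + 1), ℓ ≥ k → L k ℓ = 0)
    (hdiag : ∀ m : ℕ, 1 ≤ m → m ≤ M →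
      L (m : Fin (M + 1)) ((m - 1 : ℕ) : Fin (M + 1)) =
        (U * L) (m : Fin (M + 1)) (m : Fin (M + 1)) + A (m : Fin (M + 1)))
    (hsum : ∀ k ℓ : ℕ, ℓ < k → k ≤ M →
      L (k : Fin (M + 1)) (ℓ : Fin (M + 1)) =
        ∑ r ∈ range (k - ℓ), L ((ℓ + r + 1 : ℕ) : Fin (M + 1)) ((ℓ + r : ℕ) : Fin (M + 1))) :
    L = lowerOfSubdiag M (backwardSolve M (fun i j : ℕ => U i j) (fun i : ℕ => A i)) := by
  have hL := eq_lowerOfSubdiag hupper hsum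
  refine hL.trans (lowerOfSubdiag_congr (eq_backwardSolve fun m h hm => ?_))
  have := hdiag m h hm
  rw [hL, lowerOfSubdiag_natCast_sub_one _ h hm, mul_lowerOfSubdiag_apply_natCast_diag U _ hm]
    at this
  exact this.trans (add_comm _ _)

end solution

theorem stmt_14_general (M : ℕ)
    (U : Matrix (Fin (M + 1)) (Fin (M + 1)) ℝ)
    (hU_nonneg : ∀ k ℓ : Fin (M + 1), k < ℓ → 0 ≤ U k ℓ)
    (A : Fin (M + 1) → ℝ) (hA : ∀ m : Fin (M + 1), m ≠ 0 → 0 < A m) :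
    (∃! L : Matrix (Fin (M + 1)) (Fin (M + 1)) ℝ,
        (∀ k ℓ : Fin (M + 1), ℓ ≥ k → L k ℓ = 0) ∧
        (∀ m : ℕ, 1 ≤ m → m ≤ M →
          L (m : Fin (M + 1)) ((m - 1 : ℕ) : Fin (M + 1)) =
            (U * L) (m : Fin (M + 1)) (m : Fin (M + 1)) + A (m : Fin (M + 1))) ∧
        (∀ k ℓ : ℕ, ℓ < k → k ≤ M →
          L (k : Fin (M + 1)) (ℓ : Fin (M + 1)) =
            ∑ r ∈ Finset.range (k - ℓ),
              L ((ℓ + r + 1 : ℕ) : Fin (M + 1)) ((ℓ + r : ℕ) : Fin (M + 1)))) ∧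
      (∀ L : Matrix (Fin (M + 1)) (Fin (M + 1)) ℝ,
        ((∀ k ℓ : Fin (M + 1), ℓ ≥ k → L k ℓ = 0) ∧
        (∀ m : ℕ, 1 ≤ m → m ≤ M →
          L (m : Fin (M + 1)) ((m - 1 : ℕ) : Fin (M + 1)) =
            (U * L) (m : Fin (M + 1)) (m : Fin (M + 1)) + A (m : Fin (M + 1))) ∧
        (∀ k ℓ : ℕ, ℓ < k → k ≤ M →
          L (k : Fin (M + 1)) (ℓ : Fin (M + 1)) =
            ∑ r ∈ Finset.range (k - ℓ),
              L ((ℓ + r + 1 : ℕ) : Fin (M + 1)) ((ℓ + r : ℕ) : Fin (M + 1)))) →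
        ∀ k ℓ : Fin (M + 1), ℓ < k → 0 < L k ℓ) := by
  have hd_pos : ∀ j, 1 ≤ j → j ≤ M →
      0 < backwardSolve M (fun i j : ℕ => U i j) (fun i : ℕ => A i) j :=
    backwardSolve_pos
      (fun m ℓ h hℓ => hU_nonneg _ _ ((Fin.natCast_lt_natCast (by omega) hℓ).2 h))
      (fun m h hm => hA _ (Fin.natCast_eq_zero.not.2 (Nat.not_dvd_of_pos_of_lt h (by omega))))
  refine ⟨⟨lowerOfSubdiag M _, ⟨fun k ℓ => lowerOfSubdiag_of_le _,
      fun m => lowerOfSubdiag_backwardSolve_natCast_sub_one,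
      fun k ℓ => lowerOfSubdiag_eq_sum_range _⟩,
    fun L ⟨hupper, hdiag, hsum⟩ => eq_lowerOfSubdiag_backwardSolve hupper hdiag hsum⟩,
    fun L ⟨hupper, hdiag, hsum⟩ k ℓ h => ?_⟩
  rw [eq_lowerOfSubdiag_backwardSolve hupper hdiag hsum]
  exact lowerOfSubdiag_pos hd_pos h

theorem stmt_14 (M : ℕ) (hM : 1 ≤ M)
    (U : Matrix (Fin (M + 1)) (Fin (M + 1)) ℝ)
    (hU_nonneg : ∀ k ℓ : Fin (M + 1), k < ℓ → 0 ≤ U k ℓ)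
    (hU_zero : ∀ k ℓ : Fin (M + 1), ¬ k < ℓ → U k ℓ = 0)
    (A : Fin (M + 1) → ℝ) (hA : ∀ m : Fin (M + 1), m ≠ 0 → 0 < A m) :
    (∃! L : Matrix (Fin (M + 1)) (Fin (M + 1)) ℝ,
        (∀ k ℓ : Fin (M + 1), ℓ ≥ k → L k ℓ = 0) ∧
        (∀ m : ℕ, 1 ≤ m → m ≤ M →
          L (m : Fin (M + 1)) ((m - 1 : ℕ) : Fin (M + 1)) =
            (U * L) (m : Fin (M + 1)) (m : Fin (M + 1)) + A (m : Fin (M + 1))) ∧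
        (∀ k ℓ : ℕ, ℓ < k → k ≤ M →
          L (k : Fin (M + 1)) (ℓ : Fin (M + 1)) =
            ∑ r ∈ Finset.range (k - ℓ),
              L ((ℓ + r + 1 : ℕ) : Fin (M + 1)) ((ℓ + r : ℕ) : Fin (M + 1)))) ∧
      (∀ L : Matrix (Fin (M + 1)) (Fin (M + 1)) ℝ,
        ((∀ k ℓ : Fin (M + 1), ℓ ≥ k → L k ℓ = 0) ∧
        (∀ m : ℕ, 1 ≤ m → m ≤ M →
          L (m : Fin (M + 1)) ((m - 1 : ℕ) : Fin (M + 1)) =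
            (U * L) (m : Fin (M + 1)) (m : Fin (M + 1)) + A (m : Fin (M + 1))) ∧
        (∀ k ℓ : ℕ, ℓ < k → k ≤ M →
          L (k : Fin (M + 1)) (ℓ : Fin (M + 1)) =
            ∑ r ∈ Finset.range (k - ℓ),
              L ((ℓ + r + 1 : ℕ) : Fin (M + 1)) ((ℓ + r : ℕ) : Fin (M + 1)))) →
        ∀ k ℓ : Fin (M + 1), ℓ < k → 0 < L k ℓ) :=
  stmt_14_general M U hU_nonneg A hA
end
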